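/- As n → ∞, Σ_{k=2}^{n−2} p_{LM}(n,k)·H_k = 7/3 + O(n^{-1} log n) and Σ_{k=1}^{n−3} p_{KLM}(n,k)·H_k = 4/3 + O(n^{-1} log n), where p_{LM}(n,k) = ((n+1)(n+2)/((n−1)(n−2)(n−3)))·(72(k−1)/((k+1)(k+2)(k+3)))·((n+3)/(k+4) − 1) and p_{KLM}(n,k) = ((n+3)/((n−1)(n−2)(n−3)))·(72/((k+1)(k+2)))·((n+1)(n+2)/((k+3)(k+4)) − 1) − ((n+2)/((n−1)(n−2)(n−3)))·(144/((k+1)(k+2)))·((n+1)/(k+3) − 1). -/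

import Mathlib

/-!
Splitting `pLM n k` and `pKLM n k` into partial fractions in `k` reduces both sums to the sums
`∑_{k ≤ m} H k / ((k + 1) ⋯ (k + j))`, `j = 2, 3, 4`, which telescope to closed forms. Hence each
expectation is an explicit rational function of `n`, equal to `7/3` (resp. `4/3`) up to
`O(1/n)`, plus `H (n - 2)` (resp. `H (n - 3)`) times a rational function of order `1/n²`.
As `H m ≤ m`, the error is `O(1/n)`.
-/

open Finset

/-- `n`-th harmonic number. -/
noncomputable def H (n : ℕ) : ℝ := ∑ k ∈ Finset.Icc 1 n, (1 : ℝ) / k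

/-- Second-order harmonic number. -/
noncomputable def Hbar (n : ℕ) : ℝ := ∑ k ∈ Finset.Icc 1 n, (1 : ℝ) / (k : ℝ) ^ 2

noncomputable def pK (n k : ℕ) : ℝ :=
  ((n : ℝ) + 1) / ((n : ℝ) - 1) * (2 / (((k : ℝ) + 1) * ((k : ℝ) + 2)))

noncomputable def pL (n k : ℕ) : ℝ :=
  ((n : ℝ) + 1) * ((n : ℝ) + 2) / (((n : ℝ) - 1) * ((n : ℝ) - 2)) *
    (6 * ((k : ℝ) - 1) / (((k : ℝ) + 1) * ((k : ℝ) + 2) * ((k : ℝ) + 3)))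

noncomputable def pM (n k : ℕ) : ℝ :=
  ((n : ℝ) + 1) * ((n : ℝ) + 2) * ((n : ℝ) + 3) /
      (((n : ℝ) - 1) * ((n : ℝ) - 2) * ((n : ℝ) - 3)) *
    (12 * ((k : ℝ) - 1) * ((k : ℝ) - 2) /
      (((k : ℝ) + 1) * ((k : ℝ) + 2) * ((k : ℝ) + 3) * ((k : ℝ) + 4)))

noncomputable def pKL (n k : ℕ) : ℝ :=
  ((n : ℝ) + 1) / (((n : ℝ) - 1) * ((n : ℝ) - 2)) *
    (12 / (((k : ℝ) + 1) * ((k : ℝ) + 2))) * (((n : ℝ) + 2) / ((k : ℝ) + 3) - 1)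

noncomputable def pLM (n k : ℕ) : ℝ :=
  ((n : ℝ) + 1) * ((n : ℝ) + 2) / (((n : ℝ) - 1) * ((n : ℝ) - 2) * ((n : ℝ) - 3)) *
    (72 * ((k : ℝ) - 1) / (((k : ℝ) + 1) * ((k : ℝ) + 2) * ((k : ℝ) + 3))) *
      (((n : ℝ) + 3) / ((k : ℝ) + 4) - 1)

noncomputable def pKLM (n k : ℕ) : ℝ :=
  ((n : ℝ) + 3) / (((n : ℝ) - 1) * ((n : ℝ) - 2) * ((n : ℝ) - 3)) *
      (72 / (((k : ℝ) + 1) * ((k : ℝ) + 2))) *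
      (((n : ℝ) + 1) * ((n : ℝ) + 2) / (((k : ℝ) + 3) * ((k : ℝ) + 4)) - 1) -
    ((n : ℝ) + 2) / (((n : ℝ) - 1) * ((n : ℝ) - 2) * ((n : ℝ) - 3)) *
      (144 / (((k : ℝ) + 1) * ((k : ℝ) + 2))) * (((n : ℝ) + 1) / ((k : ℝ) + 3) - 1)

lemma H_succ (n : ℕ) : H (n + 1) = H n + 1 / (n + 1) := by
  rw [H, H, sum_Icc_succ_top (by omega)]
  push_cast
  ring

lemma H_nonneg (n : ℕ) : 0 ≤ H n :=
  sum_nonneg fun k _ => by positivity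

lemma H_le_self (n : ℕ) : H n ≤ n :=
  calc H n ≤ ∑ _k ∈ Icc 1 n, (1 : ℝ) := sum_le_sum fun k hk =>
        div_le_one_of_le₀ (by exact_mod_cast (mem_Icc.1 hk).1) k.cast_nonneg
    _ = n := by simp

lemma sum_Icc_one_eq_of_sub_eq {M : Type*} [AddCommGroup M] {f F : ℕ → M} (h0 : F 0 = 0)
    (hF : ∀ m, F (m + 1) - F m = f (m + 1)) : ∀ m, ∑ k ∈ Icc 1 m, f k = F m
  | 0 => by simp [h0]
  | m + 1 => by
    rw [sum_Icc_succ_top (by omega), sum_Icc_one_eq_of_sub_eq h0 hF m, ← hF, add_sub_cancel]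

lemma sum_H_div_rising_two (m : ℕ) :
    ∑ k ∈ Icc 1 m, H k / ((k + 1) * (k + 2)) = m / (m + 1) - H m / (m + 2) := by
  apply sum_Icc_one_eq_of_sub_eq (by simp [H])
  intro m
  rw [H_succ]
  push_cast
  field_simp
  ring

lemma sum_H_div_rising_three (m : ℕ) :
    ∑ k ∈ Icc 1 m, H k / ((k + 1) * (k + 2) * (k + 3)) =
      m * (m + 3) / (8 * (m + 1) * (m + 2)) - H m / (2 * (m + 2) * (m + 3)) := by
  apply sum_Icc_one_eq_of_sub_eq (by simp [H])
  intro m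
  rw [H_succ]
  push_cast
  field_simp
  ring

lemma sum_H_div_rising_four (m : ℕ) :
    ∑ k ∈ Icc 1 m, H k / ((k + 1) * (k + 2) * (k + 3) * (k + 4)) =
      m * (m ^ 2 + 6 * m + 11) / (54 * (m + 1) * (m + 2) * (m + 3)) -
        H m / (3 * (m + 2) * (m + 3) * (m + 4)) := by
  apply sum_Icc_one_eq_of_sub_eq (by simp [H])
  intro m
  rw [H_succ]
  push_cast
  field_simp
  ring

lemma pLM_eq (n k : ℕ) :
    pLM n k = 72 * (n + 1) * (n + 2) / ((n - 1) * (n - 2) * (n - 3)) *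
      ((n + 7) / ((k + 1) * (k + 2) * (k + 3)) -
        5 * (n + 3) / ((k + 1) * (k + 2) * (k + 3) * (k + 4)) - 1 / ((k + 1) * (k + 2))) := by
  rw [pLM]
  field_simp
  ring

lemma pKLM_eq (n k : ℕ) :
    pKLM n k = 72 * (n + 1) / ((n - 1) * (n - 2) * (n - 3)) *
      ((n + 2) * (n + 3) / ((k + 1) * (k + 2) * (k + 3) * (k + 4)) -
        2 * (n + 2) / ((k + 1) * (k + 2) * (k + 3)) + 1 / ((k + 1) * (k + 2))) := by
  rw [pKLM]
  field_simp
  ring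

lemma sum_pLM_mul_H {n : ℕ} (hn : 4 ≤ n) :
    ∑ k ∈ Icc 2 (n - 2), pLM n k * H k =
      7 / 3 + (12 * (3 * n + 1) * H (n - 2) / ((n - 1) * (n - 2) * (n - 3)) -
        (8 * n ^ 3 + 62 * n ^ 2 - 16 * n - 6) / (n * (n - 1) ^ 2 * (n - 3))) := by
  have hx : (4 : ℝ) ≤ n := by exact_mod_cast hn
  have h0 : (n : ℝ) ≠ 0 := by linarith
  have h1 : (n : ℝ) - 1 ≠ 0 := by linarith
  have h2 : (n : ℝ) - 2 ≠ 0 := by linarith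
  have h3 : (n : ℝ) - 3 ≠ 0 := by linarith
  have hcast : ((n - 2 : ℕ) : ℝ) = n - 2 := by rw [Nat.cast_sub (by omega)]; norm_num
  -- the `k = 1` term vanishes through the factor `k - 1` of `pLM`
  have hIcc : ∑ k ∈ Icc 2 (n - 2), pLM n k * H k = ∑ k ∈ Icc 1 (n - 2), pLM n k * H k := by
    rw [← sum_Ioc_add_eq_sum_Icc (show 1 ≤ n - 2 by omega), ← Icc_add_one_left_eq_Ioc]
    simp [pLM]
  have hsplit : ∀ k : ℕ, pLM n k * H k = 72 * (n + 1) * (n + 2) / ((n - 1) * (n - 2) * (n - 3)) *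
      ((n + 7) * (H k / ((k + 1) * (k + 2) * (k + 3))) -
        5 * (n + 3) * (H k / ((k + 1) * (k + 2) * (k + 3) * (k + 4))) -
        H k / ((k + 1) * (k + 2))) :=
    fun k => by rw [pLM_eq]; ring
  rw [hIcc]
  simp only [hsplit, ← mul_sum, sum_sub_distrib, sum_H_div_rising_two,
    sum_H_div_rising_three, sum_H_div_rising_four, hcast, show (n : ℝ) - 2 + 1 = n - 1 by ring,
    show (n : ℝ) - 2 + 2 = n by ring, show (n : ℝ) - 2 + 3 = n + 1 by ring,
    show (n : ℝ) - 2 + 4 = n + 2 by ring]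
  field_simp
  ring

lemma sum_pKLM_mul_H {n : ℕ} (hn : 4 ≤ n) :
    ∑ k ∈ Icc 1 (n - 3), pKLM n k * H k =
      4 / 3 - (24 * H (n - 3) / ((n - 1) * (n - 2) * (n - 3)) +
        (2 * n ^ 4 - 18 * n ^ 3 - 4 * n ^ 2 + 48 * n - 16) / (n * (n - 1) ^ 2 * (n - 2) ^ 2)) := by
  have hx : (4 : ℝ) ≤ n := by exact_mod_cast hn
  have h0 : (n : ℝ) ≠ 0 := by linarith
  have h1 : (n : ℝ) - 1 ≠ 0 := by linarith
  have h2 : (n : ℝ) - 2 ≠ 0 := by linarith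
  have h3 : (n : ℝ) - 3 ≠ 0 := by linarith
  have hcast : ((n - 3 : ℕ) : ℝ) = n - 3 := by rw [Nat.cast_sub (by omega)]; norm_num
  have hsplit : ∀ k : ℕ, pKLM n k * H k = 72 * (n + 1) / ((n - 1) * (n - 2) * (n - 3)) *
      ((n + 2) * (n + 3) * (H k / ((k + 1) * (k + 2) * (k + 3) * (k + 4))) -
        2 * (n + 2) * (H k / ((k + 1) * (k + 2) * (k + 3))) + H k / ((k + 1) * (k + 2))) :=
    fun k => by rw [pKLM_eq]; ring
  simp only [hsplit, ← mul_sum, sum_add_distrib, sum_sub_distrib, sum_H_div_rising_two,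
    sum_H_div_rising_three, sum_H_div_rising_four, hcast, show (n : ℝ) - 3 + 1 = n - 2 by ring,
    show (n : ℝ) - 3 + 2 = n - 1 by ring, show (n : ℝ) - 3 + 3 = n by ring,
    show (n : ℝ) - 3 + 4 = n + 1 by ring]
  field_simp
  ring

lemma abs_sum_pLM_mul_H_sub_le {n : ℕ} (hn : 10 ≤ n) :
    |∑ k ∈ Icc 2 (n - 2), pLM n k * H k - 7 / 3| ≤ 100 / n := by
  have hx : (10 : ℝ) ≤ n := by exact_mod_cast hn
  have hH : H (n - 2) ≤ n - 2 := by
    simpa [Nat.cast_sub (show 2 ≤ n by omega)] using H_le_self (n - 2)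
  have h1 : (0 : ℝ) < n - 1 := by linarith
  have h2 : (0 : ℝ) < n - 2 := by linarith
  have h3 : (0 : ℝ) < n - 3 := by linarith
  -- With `n = y + 10`, each polynomial inequality below has nonnegative coefficients in `y`.
  obtain ⟨y, hy, hxy⟩ : ∃ y : ℝ, 0 ≤ y ∧ (n : ℝ) = y + 10 := ⟨n - 10, by linarith, by ring⟩
  rw [sum_pLM_mul_H (by omega), add_sub_cancel_left]
  apply abs_sub_le_of_nonneg_of_le
  · exact div_nonneg (mul_nonneg (by positivity) (H_nonneg _)) (by positivity)
  · calc 12 * (3 * n + 1) * H (n - 2) / ((n - 1) * (n - 2) * (n - 3))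
        ≤ 12 * (3 * n + 1) * (n - 2) / ((n - 1) * (n - 2) * (n - 3)) := by gcongr
      _ = 12 * (3 * n + 1) / ((n - 1) * (n - 3)) := by field_simp
      _ ≤ 100 / n := by
        rw [div_le_div_iff₀ (by positivity) (by positivity), ← sub_nonneg, hxy]
        ring_nf
        positivity
  · apply div_nonneg _ (by positivity)
    rw [hxy]
    ring_nf
    positivity
  · rw [div_le_div_iff₀ (by positivity) (by positivity), ← sub_nonneg, hxy]
    ring_nf
    positivity

lemma abs_sum_pKLM_mul_H_sub_le {n : ℕ} (hn : 10 ≤ n) :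
    |∑ k ∈ Icc 1 (n - 3), pKLM n k * H k - 4 / 3| ≤ 12 / n := by
  have hx : (10 : ℝ) ≤ n := by exact_mod_cast hn
  have hH : H (n - 3) ≤ n - 3 := by
    simpa [Nat.cast_sub (show 3 ≤ n by omega)] using H_le_self (n - 3)
  have h1 : (0 : ℝ) < n - 1 := by linarith
  have h2 : (0 : ℝ) < n - 2 := by linarith
  have h3 : (0 : ℝ) < n - 3 := by linarith
  obtain ⟨y, hy, hxy⟩ : ∃ y : ℝ, 0 ≤ y ∧ (n : ℝ) = y + 10 := ⟨n - 10, by linarith, by ring⟩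
  have hT1 : 24 * H (n - 3) / ((n - 1) * (n - 2) * (n - 3)) ≤ 10 / n :=
    calc 24 * H (n - 3) / ((n - 1) * (n - 2) * (n - 3))
        ≤ 24 * (n - 3) / ((n - 1) * (n - 2) * (n - 3)) := by gcongr
      _ = 24 / ((n - 1) * (n - 2)) := by field_simp
      _ ≤ 10 / n := by
        rw [div_le_div_iff₀ (by positivity) (by positivity), ← sub_nonneg, hxy]
        ring_nf
        positivity
  have hT2 : (2 * (n : ℝ) ^ 4 - 18 * n ^ 3 - 4 * n ^ 2 + 48 * n - 16) /
      (n * (n - 1) ^ 2 * (n - 2) ^ 2) ≤ 2 / n := by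
    rw [div_le_div_iff₀ (by positivity) (by positivity), ← sub_nonneg, hxy]
    ring_nf
    positivity
  rw [sum_pKLM_mul_H (by omega), sub_sub_cancel_left, abs_neg, abs_of_nonneg]
  · exact (add_le_add hT1 hT2).trans_eq (by ring)
  · refine add_nonneg (div_nonneg (mul_nonneg (by norm_num) (H_nonneg _)) (by positivity))
      (div_nonneg ?_ (by positivity))
    rw [hxy]
    ring_nf
    positivity

lemma div_le_mul_log_div {C x : ℝ} (hC : 0 ≤ C) (hx : 3 ≤ x) : C / x ≤ C * Real.log x / x := by
  have hlog : 1 ≤ Real.log x := by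
    rw [Real.le_log_iff_exp_le (by linarith)]
    linarith [Real.exp_one_lt_d9]
  gcongr
  exact le_mul_of_one_le_right hC hlog

theorem expectation_H_LM_and_H_KLM :
    (∃ C : ℝ, 0 < C ∧ ∃ N : ℕ, ∀ n : ℕ, N ≤ n →
      |∑ k ∈ Finset.Icc 2 (n - 2), pLM n k * H k - 7 / 3| ≤ C * Real.log n / n) ∧
    (∃ C : ℝ, 0 < C ∧ ∃ N : ℕ, ∀ n : ℕ, N ≤ n →
      |∑ k ∈ Finset.Icc 1 (n - 3), pKLM n k * H k - 4 / 3| ≤ C * Real.log n / n) := by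
  have h3 {n : ℕ} (hn : 10 ≤ n) : (3 : ℝ) ≤ n := by exact_mod_cast (by omega : 3 ≤ n)
  exact ⟨⟨100, by norm_num, 10, fun n hn =>
      (abs_sum_pLM_mul_H_sub_le hn).trans (div_le_mul_log_div (by norm_num) (h3 hn))⟩,
    ⟨12, by norm_num, 10, fun n hn =>
      (abs_sum_pKLM_mul_H_sub_le hn).trans (div_le_mul_log_div (by norm_num) (h3 hn))⟩⟩
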